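/- Let u, v : [0,T] → ℝ be nonnegative differentiable functions satisfying u' ≤ v and v' ≤ u·v on [0,T]. Then for all t in [0,T] with (u(0)² + v(0))^{1/2}·t < 1, one has u(t)² + v(t) ≤ (u(0)² + v(0)) / (1 - (u(0)² + v(0))^{1/2}·t)². -/

import Mathlib

open Set Filter Topology

/-! For `w = u² + v` the hypotheses give `w' = 2uu' + v' ≤ 3uv ≤ 2 w √w`. Where `w > 0` this says
exactly that `x + 1 / √(w x)` is nondecreasing, which integrates to the bound. Replacing `w` by
`w + ε` makes it positive without spoiling the differential inequality, and `ε → 0` gives the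
general case. -/

theorem three_mul_mul_le_two_mul_sqrt {u v : ℝ} (hu : 0 ≤ u) (hv : 0 ≤ v) :
    3 * u * v ≤ 2 * (u ^ 2 + v) * √(u ^ 2 + v) := by
  set s := √(u ^ 2 + v)
  have hs : s ^ 2 = u ^ 2 + v := Real.sq_sqrt (by positivity)
  have hus : u ≤ s := Real.le_sqrt_of_sq_le (by linarith)
  -- with `v = s² - u²` the claim is `(s - u)² (2 s + u) ≥ 0`
  rw [← hs]
  nlinarith [mul_nonneg (sq_nonneg (s - u)) (by linarith : 0 ≤ 2 * s + u)]

section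

variable {W W' : ℝ → ℝ} {a b : ℝ}

theorem monotoneOn_add_inv_sqrt (hW : ∀ x ∈ Icc a b, HasDerivAt W (W' x) x)
    (hpos : ∀ x ∈ Icc a b, 0 < W x) (hW' : ∀ x ∈ Icc a b, W' x ≤ 2 * W x * √(W x)) :
    MonotoneOn (fun x => x + (√(W x))⁻¹) (Icc a b) := by
  have hderiv : ∀ x ∈ Icc a b, HasDerivAt (fun x => x + (√(W x))⁻¹)
      (1 - W' x / (2 * W x * √(W x))) x := by
    intro x hx
    have hsqrt := (hW x hx).sqrt (hpos x hx).ne'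
    refine ((hasDerivAt_id x).add (hsqrt.inv (Real.sqrt_pos.2 (hpos x hx)).ne')).congr_deriv ?_
    rw [Real.sq_sqrt (hpos x hx).le]
    field_simp
    ring
  refine monotoneOn_of_hasDerivWithinAt_nonneg (convex_Icc a b)
    (fun x hx => (hderiv x hx).continuousAt.continuousWithinAt)
    (fun x hx => (hderiv x (interior_subset hx)).hasDerivWithinAt) fun x hx => ?_
  have hx := interior_subset hx
  have : 0 < 2 * W x * √(W x) := by
    have := hpos x hx
    positivity
  rw [sub_nonneg, div_le_one this]
  exact hW' x hx

theorem image_le_of_deriv_le_two_mul_sqrt_of_pos (hab : a ≤ b)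
    (hW : ∀ x ∈ Icc a b, HasDerivAt W (W' x) x)
    (hpos : ∀ x ∈ Icc a b, 0 < W x) (hW' : ∀ x ∈ Icc a b, W' x ≤ 2 * W x * √(W x))
    (hlt : √(W a) * (b - a) < 1) :
    W b ≤ W a / (1 - √(W a) * (b - a)) ^ 2 := by
  have ha : a ∈ Icc a b := left_mem_Icc.2 hab
  have hb : b ∈ Icc a b := right_mem_Icc.2 hab
  have hmono := monotoneOn_add_inv_sqrt hW hpos hW' ha hb hab
  simp only at hmono
  set s₀ := √(W a)
  set s := √(W b)
  have hs₀ : 0 < s₀ := Real.sqrt_pos.2 (hpos a ha)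
  have hs : 0 < s := Real.sqrt_pos.2 (hpos b hb)
  have hden : 0 < 1 - s₀ * (b - a) := by linarith
  have hss₀ : s ≤ s₀ / (1 - s₀ * (b - a)) := by
    rw [le_div_iff₀ hden]
    have := mul_le_mul_of_nonneg_left hmono (mul_pos hs hs₀).le
    field_simp at this
    linarith
  calc W b = s ^ 2 := (Real.sq_sqrt (hpos b hb).le).symm
    _ ≤ (s₀ / (1 - s₀ * (b - a))) ^ 2 := by gcongr
    _ = W a / (1 - s₀ * (b - a)) ^ 2 := by rw [div_pow, Real.sq_sqrt (hpos a ha).le]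

theorem image_le_of_deriv_le_two_mul_sqrt (hab : a ≤ b)
    (hW : ∀ x ∈ Icc a b, HasDerivAt W (W' x) x)
    (hnonneg : ∀ x ∈ Icc a b, 0 ≤ W x) (hW' : ∀ x ∈ Icc a b, W' x ≤ 2 * W x * √(W x))
    (hlt : √(W a) * (b - a) < 1) :
    W b ≤ W a / (1 - √(W a) * (b - a)) ^ 2 := by
  set F : ℝ → ℝ := fun ε => (W a + ε) / (1 - √(W a + ε) * (b - a)) ^ 2 - ε
  have hcont : ContinuousAt F 0 := by
    have : (1 - √(W a + 0) * (b - a)) ^ 2 ≠ 0 := by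
      rw [add_zero]
      exact pow_ne_zero _ (by linarith)
    fun_prop (disch := exact this)
  have hsmall : ∀ᶠ ε in 𝓝 (0 : ℝ), √(W a + ε) * (b - a) < 1 := by
    refine ContinuousAt.eventually_lt (by fun_prop) continuousAt_const ?_
    simpa using hlt
  have hF : ∀ᶠ ε in 𝓝[>] (0 : ℝ), W b ≤ F ε := by
    filter_upwards [nhdsWithin_le_nhds hsmall, self_mem_nhdsWithin] with ε hε (hε₀ : 0 < ε)
    rw [le_sub_iff_add_le]
    refine image_le_of_deriv_le_two_mul_sqrt_of_pos (W := fun x => W x + ε) hab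
      (fun x hx => (hW x hx).add_const ε) (fun x hx => by linarith [hnonneg x hx]) ?_ hε
    intro x hx
    have := hnonneg x hx
    calc W' x ≤ 2 * W x * √(W x) := hW' x hx
      _ ≤ 2 * (W x + ε) * √(W x + ε) := by gcongr <;> linarith
  simpa [F] using ge_of_tendsto (hcont.continuousWithinAt.tendsto) hF

end

/-- Grönwall-type comparison lemma: if `u' ≤ v` and `v' ≤ u·v` on `[0,T]` for nonnegative
differentiable `u, v`, then `u(t)² + v(t) ≤ (u(0)² + v(0)) / (1 - √(u(0)² + v(0))·t)²`. -/
theorem stmt_0 (T : ℝ) (u v u' v' : ℝ → ℝ)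
    (hu : ∀ t ∈ Set.Icc (0:ℝ) T, HasDerivAt u (u' t) t)
    (hv : ∀ t ∈ Set.Icc (0:ℝ) T, HasDerivAt v (v' t) t)
    (hu0 : ∀ t ∈ Set.Icc (0:ℝ) T, 0 ≤ u t)
    (hv0 : ∀ t ∈ Set.Icc (0:ℝ) T, 0 ≤ v t)
    (h1 : ∀ t ∈ Set.Icc (0:ℝ) T, u' t ≤ v t)
    (h2 : ∀ t ∈ Set.Icc (0:ℝ) T, v' t ≤ u t * v t)
    (t : ℝ) (ht : t ∈ Set.Icc (0:ℝ) T)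
    (hlt : Real.sqrt (u 0 ^ 2 + v 0) * t < 1) :
    u t ^ 2 + v t ≤ (u 0 ^ 2 + v 0) / (1 - Real.sqrt (u 0 ^ 2 + v 0) * t) ^ 2 := by
  have hsub : Icc 0 t ⊆ Icc 0 T := Icc_subset_Icc_right ht.2
  have hderiv : ∀ x ∈ Icc 0 t,
      HasDerivAt (fun y => u y ^ 2 + v y) (2 * u x * u' x + v' x) x := fun x hx => by
    refine (((hu x (hsub hx)).pow 2).add (hv x (hsub hx))).congr_deriv ?_
    ring
  have hbound : ∀ x ∈ Icc 0 t, 2 * u x * u' x + v' x ≤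
      2 * (u x ^ 2 + v x) * √(u x ^ 2 + v x) := fun x hx => by
    have hux := hu0 x (hsub hx)
    have hvx := hv0 x (hsub hx)
    calc 2 * u x * u' x + v' x ≤ 2 * u x * v x + u x * v x := by
          gcongr
          exacts [h1 x (hsub hx), h2 x (hsub hx)]
      _ = 3 * u x * v x := by ring
      _ ≤ _ := three_mul_mul_le_two_mul_sqrt hux hvx
  simpa using image_le_of_deriv_le_two_mul_sqrt ht.1 hderiv
    (fun x hx => add_nonneg (sq_nonneg _) (hv0 x (hsub hx))) hbound (by simpa using hlt)
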